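/- Under the hypotheses of the A_k-chain configuration (vertices 1,…,k of a weighted graph on {1,…,n} over a field K form a chain: a_{i,i+1} = 1 for 1 ≤ i ≤ k−1, a_{ij} = 0 for other pairs i < j ≤ k, and a_{ij} = 0 for i ≤ k−1 < j), with C_i(t) the Coxeter polynomial of the induced subgraph on {i+1,…,n} evaluated at nonzero t ∈ K (C₀ the whole graph), the following Christoffel–Darboux identity holds for all nonzero x, y ∈ K and 1 ≤ i ≤ k−1: C_{i−1}(x)·C_i(y) − C_{i−1}(y)·C_i(x) = (x + x⁻¹ − y − y⁻¹)·Σ_{j=i}^{k−1} C_j(x)·C_j(y) + C_{k−1}(x)·C_k(y) − C_{k−1}(y)·C_k(x). -/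

import Mathlib

/-!
Under the chain hypotheses, vertex `i` of the induced subgraph on `{i, …, n - 1}` is adjacent
only to `i + 1`, with weight `1`, so expanding the determinant along its first row and column
gives the three-term recurrence `C_i(t) = (t + t⁻¹) C_{i+1}(t) - C_{i+2}(t)`. For solutions
`p`, `q` of such recurrences with parameters `α`, `β`, the Casoratian
`W_j = p_{j-1} q_j - q_{j-1} p_j` satisfies `W_j - W_{j+1} = (α - β) p_j q_j`, and the identity
telescopes from `i` to `k`.
-/

open Matrix Finset

/-- The Seifert matrix of a weighted graph on `Fin n` with symmetric weights `a`. -/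
def chainSeifert {K : Type*} [Field K] {n : ℕ} (a : Fin n → Fin n → K) :
    Matrix (Fin n) (Fin n) K :=
  Matrix.of fun i j => if i = j then (1 : K) else if i < j then -a i j else 0

/-- `coxMatrix a t = t • S + t⁻¹ • Sᵀ`, whose determinant is the Coxeter polynomial. -/
def coxMatrix {K : Type*} [Field K] {n : ℕ} (a : Fin n → Fin n → K) (t : K) :
    Matrix (Fin n) (Fin n) K :=
  t • chainSeifert a + t⁻¹ • (chainSeifert a)ᵀ

/-- `chainC a t i` is the Coxeter polynomial of the induced subgraph on the vertices
`{i, i+1, …, n-1}` of `Fin n` (i.e. vertices `{i+1, …, n}` in 1-based numbering);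
for `i = 0` it is the Coxeter polynomial of the whole graph. -/
def chainC {K : Type*} [Field K] {n : ℕ} (a : Fin n → Fin n → K) (t : K) (i : ℕ) : K :=
  ((coxMatrix a t).submatrix
    (fun x : Fin (n - i) => (⟨i + x.val, by have := x.isLt; omega⟩ : Fin n))
    (fun x : Fin (n - i) => (⟨i + x.val, by have := x.isLt; omega⟩ : Fin n))).det

theorem Matrix.det_eq_of_first_row_col_eq_zero {R : Type*} [CommRing R] {m : ℕ}
    (M : Matrix (Fin (m + 2)) (Fin (m + 2)) R)
    (hrow : ∀ j : Fin m, M 0 j.succ.succ = 0) (hcol : ∀ j : Fin m, M j.succ.succ 0 = 0) :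
    M.det = M 0 0 * (M.submatrix Fin.succ Fin.succ).det
      - M 0 1 * M 1 0 * ((M.submatrix Fin.succ Fin.succ).submatrix Fin.succ Fin.succ).det := by
  have hminor : (M.submatrix Fin.succ (Fin.succAbove 1)).det
      = M 1 0 * ((M.submatrix Fin.succ Fin.succ).submatrix Fin.succ Fin.succ).det := by
    rw [det_succ_column_zero, Fin.sum_univ_succ]
    simp [hcol, Function.comp_def]
  rw [det_succ_row_zero, Fin.sum_univ_succ, Fin.sum_univ_succ]
  simp only [Fin.coe_ofNat_eq_mod, Nat.zero_mod, pow_zero, one_mul, Fin.succAbove_zero,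
    Fin.succ_zero_eq_one, Nat.one_mod, pow_one, neg_mul, hminor, hrow, mul_zero, zero_mul,
    sum_const_zero, add_zero]
  ring

theorem christoffel_darboux_of_three_term_recurrence {R : Type*} [CommRing R]
    (p q : ℕ → R) (α β : R) {i k : ℕ} (hik : i ≤ k)
    (hp : ∀ j ∈ Ico i k, p (j - 1) = α * p j - p (j + 1))
    (hq : ∀ j ∈ Ico i k, q (j - 1) = β * q j - q (j + 1)) :
    p (i - 1) * q i - q (i - 1) * p i
      = (α - β) * ∑ j ∈ Ico i k, p j * q j + (p (k - 1) * q k - q (k - 1) * p k) := by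
  set W : ℕ → R := fun j => p (j - 1) * q j - q (j - 1) * p j
  have hstep : ∀ j ∈ Ico i k, (α - β) * (p j * q j) = -(W (j + 1) - W j) := by
    intro j hj
    simp only [W, Nat.add_sub_cancel, hp j hj, hq j hj]
    ring
  rw [mul_sum, sum_congr rfl hstep, sum_neg_distrib, sum_Ico_sub W hik]
  ring

section Coxeter

variable {K : Type*} [Field K] {n : ℕ}

lemma coxMatrix_self (a : Fin n → Fin n → K) (t : K) (p : Fin n) :
    coxMatrix a t p p = t + t⁻¹ := by
  simp [coxMatrix, chainSeifert]

lemma coxMatrix_of_lt (a : Fin n → Fin n → K) (t : K) {p q : Fin n} (h : p < q) :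
    coxMatrix a t p q = -(t * a p q) := by
  simp [coxMatrix, chainSeifert, h, h.ne, h.ne', h.not_gt]

lemma coxMatrix_of_gt (a : Fin n → Fin n → K) (t : K) {p q : Fin n} (h : q < p) :
    coxMatrix a t p q = -(t⁻¹ * a q p) := by
  simp [coxMatrix, chainSeifert, h, h.ne, h.ne', h.not_gt]

def coxTail (a : Fin n → Fin n → K) (t : K) (i m : ℕ) (h : i + m ≤ n) :
    Matrix (Fin m) (Fin m) K :=
  (coxMatrix a t).submatrix (fun p => ⟨i + p, by omega⟩) (fun p => ⟨i + p, by omega⟩)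

lemma chainC_eq_det_coxTail (a : Fin n → Fin n → K) (t : K) {i m : ℕ} (h : i + m = n) :
    chainC a t i = (coxTail a t i m h.le).det := by
  obtain rfl : m = n - i := by omega
  rfl

lemma coxTail_submatrix_succ (a : Fin n → Fin n → K) (t : K) {i m : ℕ}
    (h : i + (m + 1) ≤ n) :
    (coxTail a t i (m + 1) h).submatrix Fin.succ Fin.succ = coxTail a t (i + 1) m (by omega) := by
  ext p q
  simp only [coxTail, submatrix_apply, Fin.val_succ, add_assoc, add_comm 1]

lemma chainC_three_term (a : Fin n → Fin n → K) {t : K} (ht : t ≠ 0) {i : ℕ}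
    (hi : i + 2 ≤ n)
    (hnext : a ⟨i, by omega⟩ ⟨i + 1, by omega⟩ = 1)
    (hfar : ∀ j : Fin n, i + 1 < j → a ⟨i, by omega⟩ j = 0) :
    chainC a t i = (t + t⁻¹) * chainC a t (i + 1) - chainC a t (i + 2) := by
  obtain ⟨m, rfl⟩ : ∃ m, n = i + (m + 2) := ⟨n - (i + 2), by omega⟩
  set M := coxTail a t i (m + 2) le_rfl
  have hC₁ : chainC a t (i + 1) = (M.submatrix Fin.succ Fin.succ).det := by
    rw [chainC_eq_det_coxTail a t (m := m + 1) (by omega), coxTail_submatrix_succ]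
  have hC₂ :
      chainC a t (i + 2) = ((M.submatrix Fin.succ Fin.succ).submatrix Fin.succ Fin.succ).det := by
    rw [chainC_eq_det_coxTail a t (m := m) (by omega), coxTail_submatrix_succ,
      coxTail_submatrix_succ]
  have hrow : ∀ j : Fin m, M 0 j.succ.succ = 0 := fun j => by
    change coxMatrix a t ⟨i, by omega⟩ ⟨i + (j + 2), by omega⟩ = 0
    rw [coxMatrix_of_lt a t (Fin.mk_lt_mk.mpr (by omega)), hfar _ (by dsimp; omega), mul_zero,
      neg_zero]
  have hcol : ∀ j : Fin m, M j.succ.succ 0 = 0 := fun j => by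
    change coxMatrix a t ⟨i + (j + 2), by omega⟩ ⟨i, by omega⟩ = 0
    rw [coxMatrix_of_gt a t (Fin.mk_lt_mk.mpr (by omega)), hfar _ (by dsimp; omega), mul_zero,
      neg_zero]
  have hM00 : M 0 0 = t + t⁻¹ := coxMatrix_self a t _
  have hM01 : M 0 1 * M 1 0 = 1 := by
    change coxMatrix a t ⟨i, by omega⟩ ⟨i + 1, by omega⟩
        * coxMatrix a t ⟨i + 1, by omega⟩ ⟨i, by omega⟩ = 1
    rw [coxMatrix_of_lt a t (Fin.mk_lt_mk.mpr (by omega)),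
      coxMatrix_of_gt a t (Fin.mk_lt_mk.mpr (by omega)), hnext]
    field_simp
  rw [chainC_eq_det_coxTail a t rfl, det_eq_of_first_row_col_eq_zero M hrow hcol, hM00, hM01,
    one_mul, hC₁, hC₂]

end Coxeter

/-- The Christoffel–Darboux identity of Example 2 (multiplied through by `x - y`):
under the `A_k`-chain hypotheses, for nonzero `x, y` and `1 ≤ i ≤ k - 1`,
`C_{i-1}(x)·C_i(y) - C_{i-1}(y)·C_i(x)
  = (x + x⁻¹ - y - y⁻¹)·Σ_{j=i}^{k-1} C_j(x)·C_j(y)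
    + C_{k-1}(x)·C_k(y) - C_{k-1}(y)·C_k(x)`. -/
theorem chain_christoffel_darboux {K : Type*} [Field K] (n k : ℕ)
    (a : Fin n → Fin n → K)
    (hkn : k ≤ n)
    (hchain : ∀ i : ℕ, (h : i + 1 < k) →
      a ⟨i, by omega⟩ ⟨i + 1, by omega⟩ = 1)
    (hzero : ∀ i j : ℕ, (hi : i < k) → (hj : j < k) → i < j → j ≠ i + 1 →
      a ⟨i, by omega⟩ ⟨j, by omega⟩ = 0)
    (hcut : ∀ i j : ℕ, (hi : i + 1 < k) → (hj : k ≤ j) → (hjn : j < n) →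
      a ⟨i, by omega⟩ ⟨j, by omega⟩ = 0)
    (x y : K) (hx : x ≠ 0) (hy : y ≠ 0) :
    ∀ i : ℕ, 1 ≤ i → i < k →
      chainC a x (i - 1) * chainC a y i - chainC a y (i - 1) * chainC a x i
        = (x + x⁻¹ - y - y⁻¹) *
            (∑ j ∈ Finset.Icc i (k - 1), chainC a x j * chainC a y j)
          + chainC a x (k - 1) * chainC a y k
          - chainC a y (k - 1) * chainC a x k := by
  intro i hi hik
  have hrec : ∀ t : K, t ≠ 0 → ∀ j ∈ Ico i k,
      chainC a t (j - 1) = (t + t⁻¹) * chainC a t j - chainC a t (j + 1) := by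
    intro t ht j hj
    obtain ⟨hij, hjk⟩ := mem_Ico.mp hj
    have hfar : ∀ l : Fin n, j - 1 + 1 < l → a ⟨j - 1, by omega⟩ l = 0 := by
      intro l hl
      by_cases hlk : l.val < k
      · exact hzero (j - 1) l (by omega) hlk (by omega) (by omega)
      · exact hcut (j - 1) l (by omega) (by omega) l.isLt
    have := chainC_three_term a ht (by omega) (hchain (j - 1) (by omega)) hfar
    rwa [Nat.sub_add_cancel (by omega), show j - 1 + 2 = j + 1 by omega] at this
  rw [← Ico_add_one_right_eq_Icc, Nat.sub_add_cancel (by omega),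
    christoffel_darboux_of_three_term_recurrence _ _ _ _ hik.le (hrec x hx) (hrec y hy)]
  ring
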